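/- If α = 1/2, then the even-case para-Racah recurrence coefficients are mirror-symmetric: b_n = b_{N-n} for all n = 0, 1, …, N, and u_n = u_{N-n+1} for all n = 1, 2, …, N. -/

import Mathlib

open Filter Topology Polynomial

noncomputable section

/-- The recurrence coefficient `bₙ` of the para-Racah polynomials, even case `N = 2j`. -/
def bEven (j : ℕ) (a c : ℝ) (n : ℕ) : ℝ :=
  ((n : ℝ) - 2 * j) * ((n : ℝ) + a + c) * ((n : ℝ) + a - c - j + 1) /
      (2 * (2 * (n : ℝ) + 1 - 2 * j)) +
    (n : ℝ) * ((n : ℝ) - 2 * j - a - c) * ((n : ℝ) - j - 1 + c - a) /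
      (2 * (2 * (n : ℝ) - 1 - 2 * j)) - a ^ 2

/-- The recurrence coefficient `uₙ` of the para-Racah polynomials, even case `N = 2j`. -/
def uEven (j : ℕ) (a c α : ℝ) (n : ℕ) : ℝ :=
  if n = j then
    -(1 - α) * (j : ℝ) * ((j : ℝ) + 1) * (a - c) * (a - c + 1) * (a + c + j - 1) * (a + c + j) / 2
  else if n = j + 1 then
    -α * (j : ℝ) * ((j : ℝ) + 1) * (a - c) * (a - c + 1) * (a + c + j - 1) * (a + c + j) / 2
  else
    (n : ℝ) * (2 * (j : ℝ) - n + 1) * (a + c + n - 1) * (a - c + j - n + 1)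
        * (-a + c + j - n) * (a + c + 2 * j - n) /
      (4 * (2 * (j : ℝ) - 2 * n + 1) ^ 2)

def bEvenTerm (j : ℕ) (a c x : ℝ) : ℝ :=
  (x - 2 * j) * (x + a + c) * (x + a - c - j + 1) / (2 * (2 * x + 1 - 2 * j))

theorem bEven_eq_bEvenTerm_add (j : ℕ) (a c : ℝ) (n : ℕ) :
    bEven j a c n = bEvenTerm j a c n + bEvenTerm j a c (2 * j - n) - a ^ 2 := by
  rw [bEven, bEvenTerm, bEvenTerm, ← neg_div_neg_eq _ (2 * (2 * (n : ℝ) - 1 - 2 * j))]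
  congr 3 <;> ring

theorem bEven_eq_of_add_eq {j n m : ℕ} (a c : ℝ) (h : n + m = 2 * j) :
    bEven j a c n = bEven j a c m := by
  have hm : (m : ℝ) = 2 * j - n := by
    rw [eq_sub_iff_add_eq']
    exact_mod_cast h
  rw [bEven_eq_bEvenTerm_add, bEven_eq_bEvenTerm_add, hm, sub_sub_cancel,
    add_comm (bEvenTerm _ _ _ _)]

theorem uEven_half_self_eq_succ (j : ℕ) (a c : ℝ) :
    uEven j a c (1 / 2) j = uEven j a c (1 / 2) (j + 1) := by
  simp only [uEven, if_pos, if_neg (Nat.succ_ne_self j)]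
  ring

/- Off the two central indices the formula is invariant under `x ↦ 2j + 1 - x`: this swaps the
factors `a - c + j - x + 1` and `-a + c + j - x` up to sign and negates `2j - 2x + 1`. -/
theorem uEven_half_eq_of_add_eq {j n m : ℕ} (a c : ℝ) (h : n + m = 2 * j + 1) :
    uEven j a c (1 / 2) n = uEven j a c (1 / 2) m := by
  by_cases hn : n = j
  · obtain rfl : m = j + 1 := by omega
    rw [hn, uEven_half_self_eq_succ]
  by_cases hn' : n = j + 1
  · obtain rfl : m = j := by omega
    rw [hn', uEven_half_self_eq_succ]
  have hm : (m : ℝ) = 2 * j + 1 - n := by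
    rw [eq_sub_iff_add_eq']
    exact_mod_cast h
  rw [uEven, uEven, if_neg hn, if_neg hn', if_neg (by omega), if_neg (by omega), hm]
  ring

theorem paraRacahEven_mirror_symmetry_general (j : ℕ) (a c α : ℝ) (hα : α = 1 / 2) :
    (∀ n : ℕ, n ≤ 2 * j → bEven j a c n = bEven j a c (2 * j - n)) ∧
    (∀ n : ℕ, 1 ≤ n → n ≤ 2 * j → uEven j a c α n = uEven j a c α (2 * j - n + 1)) := by
  subst hα
  exact ⟨fun n hn => bEven_eq_of_add_eq a c (by omega),
    fun n _ hn => uEven_half_eq_of_add_eq a c (by omega)⟩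

theorem paraRacahEven_mirror_symmetry (j : ℕ) (hj : 1 ≤ j) (a c α : ℝ) (hα : α = 1 / 2) :
    (∀ n : ℕ, n ≤ 2 * j → bEven j a c n = bEven j a c (2 * j - n)) ∧
    (∀ n : ℕ, 1 ≤ n → n ≤ 2 * j → uEven j a c α n = uEven j a c α (2 * j - n + 1)) :=
  paraRacahEven_mirror_symmetry_general j a c α hα
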